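/- arXiv:2604.05518 — 3 statements merged into one kernel-verified Lean document; each statement's English description precedes it below -/
import Mathlib

section
/- For a stable matrix A with Γ_∞(A) := Σ_{s=0}^∞ A^s(A^s)^⊤, setting γ := 1 − ‖Γ_∞(A)‖^{-1} ∈ [0,1), one has ‖A^k‖ ≤ γ^{k/2} / (1−γ)^{1/2} for every k ≥ 1, where ‖·‖ denotes the spectral (operator) norm. -/
open scoped Matrix.Norms.L2Operator
open Matrix MeasureTheory

noncomputable section

/-- Spectral radius of a real matrix, via its complex spectrum. -/
def specRad {n : ℕ} (A : Matrix (Fin n) (Fin n) ℝ) : ENNReal :=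
  spectralRadius ℂ (A.map (algebraMap ℝ ℂ))

/-- Infinite-time reachability Gramian `Γ_∞(A) = Σ_{s≥0} A^s (A^s)ᵀ`. -/
def gramInf {n : ℕ} (A : Matrix (Fin n) (Fin n) ℝ) : Matrix (Fin n) (Fin n) ℝ :=
  ∑' s : ℕ, A ^ s * (A ^ s)ᵀ

/-- Infinite-time excited Gramian `Ξ_∞(A,U) = Σ_{s≥0} A^s B U Bᵀ (A^s)ᵀ`. -/
def xiInf {n m : ℕ} (A : Matrix (Fin n) (Fin n) ℝ) (B : Matrix (Fin n) (Fin m) ℝ)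
    (U : Matrix (Fin m) (Fin m) ℝ) : Matrix (Fin n) (Fin n) ℝ :=
  ∑' s : ℕ, A ^ s * B * U * Bᵀ * (A ^ s)ᵀ

/-- Smallest (real) eigenvalue of a matrix. -/
def lambdaMin {n : ℕ} (M : Matrix (Fin n) (Fin n) ℝ) : ℝ :=
  sInf {r : ℝ | ∃ v : Fin n → ℝ, v ≠ 0 ∧ M.mulVec v = r • v}

/-! ### Auxiliary lemmas -/

namespace StableAux

open Filter

variable {n : ℕ}

lemma coord_le_norm {𝕜 : Type*} [RCLike 𝕜] {m : Type*} [Fintype m]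
    (x : EuclideanSpace 𝕜 m) (i : m) : ‖x i‖ ≤ ‖x‖ := by
  rw [EuclideanSpace.norm_eq]
  have h1 : ‖x i‖ = Real.sqrt (‖x i‖ ^ 2) := by
    rw [Real.sqrt_sq (norm_nonneg _)]
  rw [h1]
  apply Real.sqrt_le_sqrt
  exact Finset.single_le_sum (f := fun j => ‖x j‖ ^ 2) (fun j _ => by positivity) (Finset.mem_univ i)

lemma entry_le_norm {𝕜 : Type*} [RCLike 𝕜] {m : ℕ} (M : Matrix (Fin m) (Fin m) 𝕜) (i j : Fin m) :
    ‖M i j‖ ≤ ‖M‖ := by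
  have h := M.l2_opNorm_mulVec ((WithLp.equiv 2 _).symm (Pi.single j 1))
  have hs : ‖((WithLp.equiv 2 (Fin m → 𝕜)).symm (Pi.single j 1))‖ = 1 := by
    simpa using EuclideanSpace.norm_single (𝕜 := 𝕜) j 1
  rw [hs, mul_one] at h
  refine le_trans ?_ h
  have h2 := coord_le_norm ((WithLp.equiv 2 (Fin m → 𝕜)).symm (M *ᵥ Pi.single j 1)) i
  have h3 : ((WithLp.equiv 2 (Fin m → 𝕜)).symm (M *ᵥ Pi.single j 1)) i = M i j := by
    simp [Matrix.mulVec_single]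
  rw [h3] at h2
  exact h2

lemma norm_le_sum_entries {m : ℕ} (M : Matrix (Fin m) (Fin m) ℝ) :
    ‖M‖ ≤ ∑ i, ∑ j, ‖M i j‖ := by
  rw [Matrix.l2_opNorm_def]
  refine ContinuousLinearMap.opNorm_le_bound _ (by positivity) fun x => ?_
  have happ : ((Matrix.toEuclideanLin.trans LinearMap.toContinuousLinearMap) M) x
      = (WithLp.equiv 2 (Fin m → ℝ)).symm (M *ᵥ (WithLp.equiv 2 (Fin m → ℝ) x)) :=
    Matrix.toEuclideanLin_apply M x
  rw [happ]
  set v := (WithLp.equiv 2 (Fin m → ℝ)).symm (M *ᵥ (WithLp.equiv 2 (Fin m → ℝ) x)) with hv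
  have h1 : ‖v‖ ≤ ∑ i, ‖v i‖ := by
    rw [EuclideanSpace.norm_eq]
    have := Finset.sum_sq_le_sq_sum_of_nonneg (s := Finset.univ) (f := fun i => ‖v i‖)
      (fun i _ => norm_nonneg _)
    calc Real.sqrt (∑ i, ‖v i‖ ^ 2) ≤ Real.sqrt ((∑ i, ‖v i‖) ^ 2) := Real.sqrt_le_sqrt this
    _ = ∑ i, ‖v i‖ := Real.sqrt_sq (by positivity)
  refine h1.trans ?_
  have h2 : ∀ i, ‖v i‖ ≤ (∑ j, ‖M i j‖) * ‖x‖ := by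
    intro i
    have hvi : v i = ∑ j, M i j * x j := rfl
    rw [hvi]
    calc ‖∑ j, M i j * x j‖ ≤ ∑ j, ‖M i j * x j‖ := norm_sum_le _ _
    _ = ∑ j, ‖M i j‖ * ‖x j‖ := by simp [abs_mul]
    _ ≤ ∑ j, ‖M i j‖ * ‖x‖ := Finset.sum_le_sum fun j _ =>
        mul_le_mul_of_nonneg_left (coord_le_norm x j) (norm_nonneg _)
    _ = (∑ j, ‖M i j‖) * ‖x‖ := by rw [Finset.sum_mul]
  calc ∑ i, ‖v i‖ ≤ ∑ i, (∑ j, ‖M i j‖) * ‖x‖ := Finset.sum_le_sum fun i _ => h2 i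
  _ = (∑ i, ∑ j, ‖M i j‖) * ‖x‖ := by rw [Finset.sum_mul]

lemma norm_le_c (M : Matrix (Fin n) (Fin n) ℝ) :
    ‖M‖ ≤ (n^2 : ℝ) * ‖M.map (algebraMap ℝ ℂ)‖ := by
  refine (norm_le_sum_entries M).trans ?_
  have h : ∀ i j : Fin n, ‖M i j‖ ≤ ‖M.map (algebraMap ℝ ℂ)‖ := by
    intro i j
    have := entry_le_norm (M.map (algebraMap ℝ ℂ)) i j
    simpa [Matrix.map_apply] using this
  calc ∑ i, ∑ j, ‖M i j‖ ≤ ∑ _i : Fin n, ∑ _j : Fin n, ‖M.map (algebraMap ℝ ℂ)‖ :=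
        Finset.sum_le_sum fun i _ => Finset.sum_le_sum fun j _ => h i j
  _ = (n^2:ℝ) * ‖M.map (algebraMap ℝ ℂ)‖ := by
      simp [Finset.sum_const, mul_comm]; ring

lemma exists_geom (A : Matrix (Fin n) (Fin n) ℝ) (hA : specRad A < 1) :
    ∃ r : ℝ, 0 ≤ r ∧ r < 1 ∧ ∃ N : ℕ, ∀ s, N ≤ s → ‖A ^ s‖ ≤ (n^2 : ℝ) * r ^ s := by
  set a := A.map (algebraMap ℝ ℂ) with ha
  have htend := spectrum.pow_norm_pow_one_div_tendsto_nhds_spectralRadius a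
  have hρtop : specRad A ≠ ⊤ := hA.ne_top
  set t : ℝ := (specRad A).toReal with htdef
  have ht0 : 0 ≤ t := ENNReal.toReal_nonneg
  have ht1 : t < 1 := by
    have := (ENNReal.toReal_lt_toReal hρtop (by norm_num)).mpr hA
    simpa using this
  set r : ℝ := (t + 1) / 2 with hrdef
  have hr0 : 0 ≤ r := by positivity
  have hr1 : r < 1 := by rw [hrdef]; linarith
  have hρr : specRad A < ENNReal.ofReal r := by
    conv_lhs => rw [← ENNReal.ofReal_toReal hρtop]
    exact (ENNReal.ofReal_lt_ofReal_iff (by positivity)).mpr (by rw [hrdef]; linarith)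
  have hev : ∀ᶠ s : ℕ in atTop, ENNReal.ofReal (‖a ^ s‖ ^ (1 / (s:ℝ))) < ENNReal.ofReal r :=
    htend.eventually_lt_const hρr
  obtain ⟨N₀, hN₀⟩ := hev.exists_forall_of_atTop
  refine ⟨r, hr0, hr1, max N₀ 1, fun s hs => ?_⟩
  have hs1 : 1 ≤ s := le_trans (le_max_right _ _) hs
  have hsN : N₀ ≤ s := le_trans (le_max_left _ _) hs
  have hlt : ‖a ^ s‖ ^ (1 / (s:ℝ)) < r := by
    have := hN₀ s hsN
    exact (ENNReal.ofReal_lt_ofReal_iff (by linarith)).mp this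
  have hnorm : ‖a ^ s‖ ≤ r ^ s := by
    have hss : (0:ℝ) < (s:ℝ) := by exact_mod_cast hs1
    have h1 : (‖a ^ s‖ ^ (1 / (s:ℝ))) ^ (s:ℝ) ≤ r ^ (s:ℝ) :=
      Real.rpow_le_rpow (Real.rpow_nonneg (norm_nonneg _) _) hlt.le hss.le
    calc ‖a ^ s‖ = (‖a ^ s‖ ^ (1 / (s:ℝ))) ^ (s:ℝ) := by
          rw [← Real.rpow_mul (norm_nonneg _), one_div, inv_mul_cancel₀ hss.ne', Real.rpow_one]
    _ ≤ r ^ (s:ℝ) := h1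
    _ = r ^ s := Real.rpow_natCast r s
  calc ‖A ^ s‖ ≤ (n^2:ℝ) * ‖(A ^ s).map (algebraMap ℝ ℂ)‖ := norm_le_c _
  _ = (n^2:ℝ) * ‖a ^ s‖ := by
      rw [ha, ← RingHom.mapMatrix_apply, ← RingHom.mapMatrix_apply, map_pow]
  _ ≤ (n^2:ℝ) * r ^ s := by
      have : (0:ℝ) ≤ (n:ℝ)^2 := by positivity
      nlinarith [hnorm]

lemma transpose_norm (M : Matrix (Fin n) (Fin n) ℝ) : ‖Mᵀ‖ = ‖M‖ := by
  have h : Mᵀ = Mᴴ := by ext i j; simp [Matrix.conjTranspose_apply]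
  rw [h, Matrix.l2_opNorm_conjTranspose]

lemma ct_eq (M : Matrix (Fin n) (Fin n) ℝ) : Mᴴ = Mᵀ := by
  ext i j; simp [Matrix.conjTranspose_apply]

lemma summable_gram (A : Matrix (Fin n) (Fin n) ℝ) (hA : specRad A < 1) :
    Summable (fun s : ℕ => A ^ s * (A ^ s)ᵀ) := by
  obtain ⟨r, hr0, hr1, N, hN⟩ := exists_geom A hA
  rw [← summable_nat_add_iff N]
  apply Summable.of_norm
  have hbound : ∀ s : ℕ, ‖A ^ (s+N) * (A ^ (s+N))ᵀ‖ ≤ ((n^2:ℝ) * r^N)^2 * (r^2)^s := by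
    intro s
    have h1 : ‖A ^ (s+N)‖ ≤ (n^2:ℝ) * r^(s+N) := hN _ (by omega)
    calc ‖A ^ (s+N) * (A ^ (s+N))ᵀ‖ ≤ ‖A ^ (s+N)‖ * ‖(A ^ (s+N))ᵀ‖ := norm_mul_le _ _
    _ = ‖A ^ (s+N)‖ * ‖A ^ (s+N)‖ := by rw [transpose_norm]
    _ ≤ ((n^2:ℝ) * r^(s+N)) * ((n^2:ℝ) * r^(s+N)) :=
        mul_le_mul h1 h1 (norm_nonneg _) (by positivity)
    _ = ((n^2:ℝ) * r^N)^2 * (r^2)^s := by rw [pow_add]; ring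
  refine Summable.of_nonneg_of_le (fun s => norm_nonneg _) hbound ?_
  exact (summable_geometric_of_lt_one (by positivity) (by nlinarith)).mul_left _

/-- left-right multiplication as a CLM -/
def lrMul (A B : Matrix (Fin n) (Fin n) ℝ) :
    Matrix (Fin n) (Fin n) ℝ →L[ℝ] Matrix (Fin n) (Fin n) ℝ :=
  LinearMap.toContinuousLinearMap ((LinearMap.mulRight ℝ B).comp (LinearMap.mulLeft ℝ A))

lemma lrMul_apply (A B M : Matrix (Fin n) (Fin n) ℝ) : lrMul A B M = A * M * B := rfl

lemma gram_recursion (A : Matrix (Fin n) (Fin n) ℝ)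
    (h : Summable (fun s : ℕ => A ^ s * (A ^ s)ᵀ)) :
    gramInf A = 1 + A * gramInf A * Aᵀ := by
  have h0 := Summable.tsum_eq_zero_add h
  have hterm : ∀ s : ℕ, A ^ (s+1) * (A ^ (s+1))ᵀ = lrMul A Aᵀ (A ^ s * (A ^ s)ᵀ) := by
    intro s
    rw [lrMul_apply, pow_succ', Matrix.transpose_mul]
    noncomm_ring
  have key : (∑' s : ℕ, A ^ (s+1) * (A ^ (s+1))ᵀ) = A * gramInf A * Aᵀ := by
    calc (∑' s : ℕ, A ^ (s+1) * (A ^ (s+1))ᵀ) = ∑' s : ℕ, lrMul A Aᵀ (A ^ s * (A ^ s)ᵀ) := by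
          simp_rw [hterm]
    _ = lrMul A Aᵀ (∑' s : ℕ, A ^ s * (A ^ s)ᵀ) := ((lrMul A Aᵀ).map_tsum h).symm
    _ = A * gramInf A * Aᵀ := by rw [lrMul_apply]; rfl
  calc gramInf A = A ^ 0 * (A ^ 0)ᵀ + ∑' s : ℕ, A ^ (s+1) * (A ^ (s+1))ᵀ := h0
  _ = 1 + A * gramInf A * Aᵀ := by rw [key]; simp

/-- quadratic form as CLM in the matrix argument -/
def qf (x y : Fin n → ℝ) : Matrix (Fin n) (Fin n) ℝ →L[ℝ] ℝ :=
  LinearMap.toContinuousLinearMap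
    { toFun := fun M => x ⬝ᵥ M *ᵥ y
      map_add' := fun M N => by simp [Matrix.add_mulVec, dotProduct_add]
      map_smul' := fun c M => by simp [Matrix.smul_mulVec, dotProduct_smul] }

lemma qf_apply (x y : Fin n → ℝ) (M : Matrix (Fin n) (Fin n) ℝ) : qf x y M = x ⬝ᵥ M *ᵥ y := rfl

lemma dot_tsum (f : ℕ → Matrix (Fin n) (Fin n) ℝ) (h : Summable f) (x y : Fin n → ℝ) :
    x ⬝ᵥ (∑' s, f s) *ᵥ y = ∑' s, x ⬝ᵥ (f s) *ᵥ y := by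
  simpa [qf_apply] using (qf x y).map_tsum h

/-- transpose as CLM -/
def tCLM : Matrix (Fin n) (Fin n) ℝ →L[ℝ] Matrix (Fin n) (Fin n) ℝ :=
  LinearMap.toContinuousLinearMap
    { toFun := fun M => Mᵀ
      map_add' := fun M N => Matrix.transpose_add M N
      map_smul' := fun c M => Matrix.transpose_smul c M }

lemma transpose_tsum (f : ℕ → Matrix (Fin n) (Fin n) ℝ) (h : Summable f) :
    (∑' s, f s)ᵀ = ∑' s, (f s)ᵀ := by
  exact (tCLM (n := n)).map_tsum h

lemma dot_self_eq_norm_sq (x : Fin n → ℝ) :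
    x ⬝ᵥ x = ‖(WithLp.equiv 2 (Fin n → ℝ)).symm x‖ ^ 2 := by
  rw [EuclideanSpace.norm_eq, Real.sq_sqrt (by positivity)]
  simp [dotProduct, sq]

lemma dot_le_norm_mul (M : Matrix (Fin n) (Fin n) ℝ) (x : Fin n → ℝ) :
    x ⬝ᵥ M *ᵥ x ≤ ‖M‖ * (x ⬝ᵥ x) := by
  set x' : EuclideanSpace ℝ (Fin n) := (WithLp.equiv 2 (Fin n → ℝ)).symm x with hx'
  set w' : EuclideanSpace ℝ (Fin n) := (WithLp.equiv 2 (Fin n → ℝ)).symm (M *ᵥ x) with hw'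
  have h1 : x ⬝ᵥ M *ᵥ x = inner ℝ x' w' := by
    simp [PiLp.inner_apply, dotProduct, hx', hw', mul_comm]
  have h2 : x ⬝ᵥ x = ‖x'‖ ^ 2 := dot_self_eq_norm_sq x
  have h3 : (inner ℝ x' w' : ℝ) ≤ ‖x'‖ * ‖w'‖ := real_inner_le_norm x' w'
  have h4 : ‖w'‖ ≤ ‖M‖ * ‖x'‖ := M.l2_opNorm_mulVec x'
  rw [h1, h2]
  nlinarith [norm_nonneg x', norm_nonneg w', norm_nonneg M]

lemma psd_gram (A : Matrix (Fin n) (Fin n) ℝ) (h : Summable (fun s : ℕ => A ^ s * (A ^ s)ᵀ)) :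
    (gramInf A).PosSemidef := by
  have hterm : ∀ s : ℕ, (A ^ s * (A ^ s)ᵀ).PosSemidef := by
    intro s
    have := Matrix.posSemidef_self_mul_conjTranspose (A ^ s)
    rwa [ct_eq] at this
  refine Matrix.posSemidef_iff_dotProduct_mulVec.mpr ⟨?_, ?_⟩
  · show (gramInf A)ᴴ = gramInf A
    rw [ct_eq, gramInf, transpose_tsum _ h]
    congr 1
    funext s
    exact ((hterm s).1.symm.trans (ct_eq _)).symm
  · intro x
    have := dot_tsum _ h (star x) x
    rw [gramInf, this]
    refine tsum_nonneg fun s => ?_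
    exact (hterm s).dotProduct_mulVec_nonneg x

lemma psd_smul {M : Matrix (Fin n) (Fin n) ℝ} (hM : M.PosSemidef) {c : ℝ} (hc : 0 ≤ c) :
    (c • M).PosSemidef := by
  refine Matrix.posSemidef_iff_dotProduct_mulVec.mpr ⟨?_, ?_⟩
  · show (c • M)ᴴ = c • M
    rw [Matrix.conjTranspose_smul, hM.1]
    congr 1
  · intro x
    rw [Matrix.smul_mulVec, dotProduct_smul]
    exact mul_nonneg hc (hM.dotProduct_mulVec_nonneg x)

end StableAux

open StableAux Filter

/-- For stable `A`, with `γ := 1 − ‖Γ_∞(A)‖⁻¹ ∈ [0,1)`, one has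
`‖A^k‖ ≤ γ^(k/2) / (1−γ)^(1/2)` for every `k ≥ 1`. -/
theorem norm_pow_le_of_stable {n : ℕ} (A : Matrix (Fin n) (Fin n) ℝ)
    (hA : specRad A < 1) (hΓ : 1 ≤ ‖gramInf A‖) :
    ∀ k : ℕ, 1 ≤ k →
      ‖A ^ k‖ ≤ (1 - ‖gramInf A‖⁻¹) ^ ((k : ℝ) / 2) /
        (1 - (1 - ‖gramInf A‖⁻¹)) ^ ((1 : ℝ) / 2) := by
  intro k hk
  have hsum := summable_gram A hA
  have hrec := gram_recursion A hsum
  have hpsd := psd_gram A hsum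
  set Γ := gramInf A with hΓdef
  set g : ℝ := ‖Γ‖ with hgdef
  have hg1 : (1:ℝ) ≤ g := hΓ
  have hg0 : (0:ℝ) < g := lt_of_lt_of_le one_pos hg1
  set γ : ℝ := 1 - g⁻¹ with hγdef
  have hγ0 : 0 ≤ γ := by
    rw [hγdef]
    have : g⁻¹ ≤ 1 := inv_le_one_of_one_le₀ hg1
    linarith
  have hγ1 : γ < 1 := by
    rw [hγdef]
    have : 0 < g⁻¹ := inv_pos.mpr hg0
    linarith
  have h1γ : 1 - γ = g⁻¹ := by rw [hγdef]; ring
  -- Γ - 1 is PSD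
  have hΓ1 : (Γ - 1).PosSemidef := by
    have : Γ - 1 = A * Γ * Aᵀ := by conv_lhs => rw [hrec]; rw [add_sub_cancel_left]
    rw [this, ← ct_eq A]
    exact hpsd.mul_mul_conjTranspose_same A
  -- 1 - g⁻¹ • Γ is PSD
  have hIg : ((1 : Matrix (Fin n) (Fin n) ℝ) - g⁻¹ • Γ).PosSemidef := by
    refine Matrix.posSemidef_iff_dotProduct_mulVec.mpr ⟨?_, ?_⟩
    · show ((1 : Matrix (Fin n) (Fin n) ℝ) - g⁻¹ • Γ)ᴴ = _
      rw [Matrix.conjTranspose_sub, Matrix.conjTranspose_smul, Matrix.conjTranspose_one, hpsd.1]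
      congr 1
    · intro x
      have h1 : star x = x := by simp
      rw [h1, Matrix.sub_mulVec, dotProduct_sub, Matrix.one_mulVec,
        Matrix.smul_mulVec, dotProduct_smul]
      have h2 : x ⬝ᵥ Γ *ᵥ x ≤ g * (x ⬝ᵥ x) := dot_le_norm_mul Γ x
      have h3 : g⁻¹ * (x ⬝ᵥ Γ *ᵥ x) ≤ g⁻¹ * (g * (x ⬝ᵥ x)) :=
        mul_le_mul_of_nonneg_left h2 (by positivity)
      have h4 : g⁻¹ * (g * (x ⬝ᵥ x)) = x ⬝ᵥ x := by field_simp
      have h5 : (g⁻¹ * (x ⬝ᵥ Γ *ᵥ x) : ℝ) = g⁻¹ • (x ⬝ᵥ Γ *ᵥ x) := rfl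
      rw [← h5]
      linarith [h3.trans_eq h4]
  -- key single-step PSD
  have hstep : (γ • Γ - A * Γ * Aᵀ).PosSemidef := by
    have heq : γ • Γ - A * Γ * Aᵀ = (1 : Matrix (Fin n) (Fin n) ℝ) - g⁻¹ • Γ := by
      have hAΓ : A * Γ * Aᵀ = Γ - 1 := by
        conv_rhs => rw [hrec]; rw [add_sub_cancel_left]
      rw [hAΓ, hγdef, sub_smul, one_smul]
      abel
    rw [heq]; exact hIg
  -- induction: γ^k • Γ - A^k Γ (A^k)ᵀ is PSD
  have hind : ∀ m : ℕ, (γ ^ m • Γ - A ^ m * Γ * (A ^ m)ᵀ).PosSemidef := by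
    intro m
    induction m with
    | zero => simpa using (Matrix.PosSemidef.zero (n := Fin n) (R := ℝ))
    | succ m ih =>
      have heq : γ ^ (m+1) • Γ - A ^ (m+1) * Γ * (A ^ (m+1))ᵀ
          = γ ^ m • (γ • Γ - A * Γ * Aᵀ) + A * (γ ^ m • Γ - A ^ m * Γ * (A ^ m)ᵀ) * Aᵀ := by
        rw [pow_succ' A m, Matrix.transpose_mul]
        simp only [smul_sub, Matrix.mul_sub, Matrix.sub_mul, smul_smul, Matrix.mul_smul,
          Matrix.smul_mul, pow_succ γ m]
        rw [mul_comm (γ ^ m) γ]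
        simp only [← mul_assoc]
        abel
      rw [heq]
      have h1 : (γ ^ m • (γ • Γ - A * Γ * Aᵀ)).PosSemidef := psd_smul hstep (by positivity)
      have h2 : (A * (γ ^ m • Γ - A ^ m * Γ * (A ^ m)ᵀ) * Aᵀ).PosSemidef := by
        rw [← ct_eq A]
        exact ih.mul_mul_conjTranspose_same A
      exact h1.add h2
  -- quantitative bound : ‖A^k‖ ≤ sqrt (γ^k * g)
  have hbound : ‖A ^ k‖ ≤ Real.sqrt (γ ^ k * g) := by
    rw [← transpose_norm (A ^ k), Matrix.l2_opNorm_def]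
    refine ContinuousLinearMap.opNorm_le_bound _ (Real.sqrt_nonneg _) fun x => ?_
    have happ : ((Matrix.toEuclideanLin.trans LinearMap.toContinuousLinearMap) (A ^ k)ᵀ) x
        = (WithLp.equiv 2 (Fin n → ℝ)).symm ((A ^ k)ᵀ *ᵥ (WithLp.equiv 2 (Fin n → ℝ) x)) :=
      Matrix.toEuclideanLin_apply _ x
    rw [happ]
    set xf : Fin n → ℝ := WithLp.equiv 2 (Fin n → ℝ) x with hxf
    set v : Fin n → ℝ := (A ^ k)ᵀ *ᵥ xf with hvdef
    have hxnorm : ‖x‖ ^ 2 = xf ⬝ᵥ xf := by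
      rw [dot_self_eq_norm_sq xf]
      congr 1
    have hvnorm : ‖(WithLp.equiv 2 (Fin n → ℝ)).symm v‖ ^ 2 = v ⬝ᵥ v :=
      (dot_self_eq_norm_sq v).symm
    -- v ⬝ᵥ v ≤ v ⬝ᵥ Γ v
    have hstep1 : v ⬝ᵥ v ≤ v ⬝ᵥ Γ *ᵥ v := by
      have := hΓ1.dotProduct_mulVec_nonneg v
      rw [star_trivial, Matrix.sub_mulVec, dotProduct_sub, Matrix.one_mulVec] at this
      linarith
    -- v ⬝ᵥ Γ v = xf ⬝ᵥ (A^k Γ (A^k)ᵀ) xf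
    have hstep2 : v ⬝ᵥ Γ *ᵥ v = xf ⬝ᵥ (A ^ k * Γ * (A ^ k)ᵀ) *ᵥ xf := by
      rw [hvdef]
      rw [Matrix.mulVec_transpose]
      rw [← Matrix.mulVec_mulVec, ← Matrix.mulVec_mulVec]
      rw [Matrix.dotProduct_mulVec xf (A ^ k), Matrix.mulVec_transpose]
    -- PSD step
    have hstep3 : xf ⬝ᵥ (A ^ k * Γ * (A ^ k)ᵀ) *ᵥ xf ≤ γ ^ k * (xf ⬝ᵥ Γ *ᵥ xf) := by
      have := (hind k).dotProduct_mulVec_nonneg xf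
      rw [star_trivial, Matrix.sub_mulVec, dotProduct_sub,
        Matrix.smul_mulVec, dotProduct_smul] at this
      simp only [smul_eq_mul] at this
      linarith
    have hstep4 : xf ⬝ᵥ Γ *ᵥ xf ≤ g * (xf ⬝ᵥ xf) := dot_le_norm_mul Γ xf
    have hsq : ‖(WithLp.equiv 2 (Fin n → ℝ)).symm v‖ ^ 2 ≤ (γ ^ k * g) * ‖x‖ ^ 2 := by
      rw [hvnorm, hxnorm]
      have hγk : (0:ℝ) ≤ γ ^ k := by positivity
      calc v ⬝ᵥ v ≤ v ⬝ᵥ Γ *ᵥ v := hstep1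
      _ = xf ⬝ᵥ (A ^ k * Γ * (A ^ k)ᵀ) *ᵥ xf := hstep2
      _ ≤ γ ^ k * (xf ⬝ᵥ Γ *ᵥ xf) := hstep3
      _ ≤ γ ^ k * (g * (xf ⬝ᵥ xf)) := mul_le_mul_of_nonneg_left hstep4 hγk
      _ = (γ ^ k * g) * (xf ⬝ᵥ xf) := by ring
    calc ‖(WithLp.equiv 2 (Fin n → ℝ)).symm v‖
        = Real.sqrt (‖(WithLp.equiv 2 (Fin n → ℝ)).symm v‖ ^ 2) :=
          (Real.sqrt_sq (norm_nonneg _)).symm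
    _ ≤ Real.sqrt ((γ ^ k * g) * ‖x‖ ^ 2) := Real.sqrt_le_sqrt hsq
    _ = Real.sqrt (γ ^ k * g) * ‖x‖ := by
        rw [Real.sqrt_mul (by positivity), Real.sqrt_sq (norm_nonneg _)]
  -- convert sqrt to rpow expression
  refine hbound.trans (le_of_eq ?_)
  have hsub : 1 - (1 - g⁻¹) = g⁻¹ := by ring
  show Real.sqrt (γ ^ k * g) = γ ^ ((k:ℝ)/2) / (1 - γ) ^ ((1:ℝ)/2)
  rw [h1γ]
  have h1 : (γ ^ k : ℝ) ^ ((1:ℝ)/2) = γ ^ ((k:ℝ)/2) := by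
    rw [← Real.rpow_natCast γ k, ← Real.rpow_mul hγ0, mul_one_div]
  have h2 : (g⁻¹ : ℝ) ^ ((1:ℝ)/2) = (g ^ ((1:ℝ)/2))⁻¹ := Real.inv_rpow hg0.le _
  rw [Real.sqrt_eq_rpow, Real.mul_rpow (by positivity) hg0.le, h1, h2]
  rw [div_eq_mul_inv _ ((g ^ ((1:ℝ)/2))⁻¹), inv_inv]
end
end

section
/- For a stable matrix A, the spectral radius satisfies ρ(A) ≤ √(1 − ‖Γ_∞(A)‖^{-1}), where Γ_∞(A) = Σ_{s=0}^∞ A^s(A^s)^⊤. -/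
open scoped Matrix.Norms.L2Operator
open Matrix MeasureTheory

noncomputable section

namespace SpecRadAux

open Filter

variable {n : ℕ}

lemma mapC_mulVec (M : Matrix (Fin n) (Fin n) ℝ) (x : Fin n → ℝ) :
    (M.map (algebraMap ℝ ℂ)) *ᵥ (fun i => ((x i : ℝ) : ℂ)) = fun i => (((M *ᵥ x) i : ℝ) : ℂ) := by
  funext i
  have := RingHom.map_mulVec (algebraMap ℝ ℂ) M x i
  simpa [Function.comp_def] using this.symm

lemma norm_sq_eucl (y : Fin n → ℝ) :
    ‖((WithLp.equiv 2 _).symm y : EuclideanSpace ℝ (Fin n))‖ ^ 2 = ∑ i, y i ^ 2 := by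
  rw [EuclideanSpace.norm_eq, Real.sq_sqrt (by positivity)]
  simp [sq_abs]

lemma norm_coe_vec (y : Fin n → ℝ) :
    ‖((WithLp.equiv 2 _).symm (fun i => ((y i : ℝ) : ℂ)) : EuclideanSpace ℂ (Fin n))‖
      = ‖((WithLp.equiv 2 _).symm y : EuclideanSpace ℝ (Fin n))‖ := by
  simp [EuclideanSpace.norm_eq]

lemma norm_mapC (M : Matrix (Fin n) (Fin n) ℝ) :
    ‖M.map (algebraMap ℝ ℂ)‖ = ‖M‖ := by
  classical
  apply le_antisymm
  · rw [Matrix.l2_opNorm_def]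
    apply ContinuousLinearMap.opNorm_le_bound _ (norm_nonneg M)
    intro x
    set a : Fin n → ℝ := fun i => (x i).re with ha
    set b : Fin n → ℝ := fun i => (x i).im with hb
    have hx : (WithLp.equiv 2 _) x = (fun j => ((a j : ℝ) : ℂ)) + Complex.I • (fun j => ((b j : ℝ) : ℂ)) := by
      funext j
      simp only [ha, hb, Pi.add_apply, Pi.smul_apply, smul_eq_mul]
      rw [mul_comm]
      exact (Complex.re_add_im (x j)).symm
    have key : (M.map (algebraMap ℝ ℂ)) *ᵥ ((WithLp.equiv 2 _) x)
        = (fun i => (((M *ᵥ a) i : ℝ) : ℂ)) + Complex.I • (fun i => (((M *ᵥ b) i : ℝ) : ℂ)) := by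
      rw [hx, Matrix.mulVec_add, Matrix.mulVec_smul, mapC_mulVec, mapC_mulVec]
    have hTx : ‖(toEuclideanLin (𝕜 := ℂ) (m := Fin n) (n := Fin n)).trans
        LinearMap.toContinuousLinearMap (M.map (algebraMap ℝ ℂ)) x‖ ^ 2
        = ∑ i, ‖((M.map (algebraMap ℝ ℂ)) *ᵥ ((WithLp.equiv 2 _) x)) i‖ ^ 2 := by
      rw [EuclideanSpace.norm_eq, Real.sq_sqrt (by positivity)]
      simp only [sq_abs]
      rfl
    have hsum : ∑ i, ‖((M.map (algebraMap ℝ ℂ)) *ᵥ ((WithLp.equiv 2 _) x)) i‖ ^ 2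
        = ∑ i, ((M *ᵥ a) i ^ 2 + (M *ᵥ b) i ^ 2) := by
      apply Finset.sum_congr rfl
      intro i _
      rw [key]
      simp only [Pi.add_apply, Pi.smul_apply, smul_eq_mul]
      rw [show (((M *ᵥ a) i : ℝ) : ℂ) + Complex.I * (((M *ᵥ b) i : ℝ) : ℂ)
          = Complex.mk ((M *ᵥ a) i) ((M *ᵥ b) i) by
        simp [Complex.ext_iff]]
      rw [Complex.sq_norm, Complex.normSq_mk]
      ring
    have hMa' : M *ᵥ ((WithLp.equiv 2 _).symm a : EuclideanSpace ℝ (Fin n)) = M *ᵥ a := rfl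
    have hMa := M.l2_opNorm_mulVec ((WithLp.equiv 2 _).symm a)
    have hMb := M.l2_opNorm_mulVec ((WithLp.equiv 2 _).symm b)
    rw [hMa'] at hMa
    rw [show M *ᵥ ((WithLp.equiv 2 _).symm b : EuclideanSpace ℝ (Fin n)) = M *ᵥ b from rfl] at hMb
    have h1 : ∑ i, (M *ᵥ a) i ^ 2 ≤ (‖M‖ * ‖((WithLp.equiv 2 _).symm a : EuclideanSpace ℝ (Fin n))‖) ^ 2 := by
      rw [← norm_sq_eucl (M *ᵥ a)]
      exact pow_le_pow_left₀ (norm_nonneg _) hMa 2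
    have h2 : ∑ i, (M *ᵥ b) i ^ 2 ≤ (‖M‖ * ‖((WithLp.equiv 2 _).symm b : EuclideanSpace ℝ (Fin n))‖) ^ 2 := by
      rw [← norm_sq_eucl (M *ᵥ b)]
      exact pow_le_pow_left₀ (norm_nonneg _) hMb 2
    have hxnorm : ‖x‖ ^ 2 = ‖((WithLp.equiv 2 _).symm a : EuclideanSpace ℝ (Fin n))‖ ^ 2
        + ‖((WithLp.equiv 2 _).symm b : EuclideanSpace ℝ (Fin n))‖ ^ 2 := by
      rw [norm_sq_eucl, norm_sq_eucl, EuclideanSpace.norm_eq, Real.sq_sqrt (by positivity)]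
      rw [← Finset.sum_add_distrib]
      apply Finset.sum_congr rfl
      intro i _
      rw [Complex.sq_norm, Complex.normSq_apply]
      simp only [ha, hb]
      ring
    have hfinal : ‖(toEuclideanLin (𝕜 := ℂ) (m := Fin n) (n := Fin n)).trans
        LinearMap.toContinuousLinearMap (M.map (algebraMap ℝ ℂ)) x‖ ^ 2 ≤ (‖M‖ * ‖x‖) ^ 2 := by
      rw [hTx, hsum, Finset.sum_add_distrib]
      calc _ ≤ _ := add_le_add h1 h2
      _ = (‖M‖ * ‖x‖)^2 := by rw [mul_pow, mul_pow, mul_pow, ← mul_add, ← hxnorm]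
    have := Real.sqrt_le_sqrt hfinal
    rwa [Real.sqrt_sq (norm_nonneg _), Real.sqrt_sq (by positivity)] at this
  · rw [Matrix.l2_opNorm_def (A := M)]
    apply ContinuousLinearMap.opNorm_le_bound _ (norm_nonneg _)
    intro x
    set xf : Fin n → ℝ := (WithLp.equiv 2 _) x with hxf
    have h1 : (toEuclideanLin (𝕜 := ℝ) (m := Fin n) (n := Fin n)).trans
        LinearMap.toContinuousLinearMap M x
        = ((WithLp.equiv 2 _).symm (M *ᵥ xf) : EuclideanSpace ℝ (Fin n)) := rfl
    have h2 := (M.map (algebraMap ℝ ℂ)).l2_opNorm_mulVec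
      ((WithLp.equiv 2 _).symm (fun i => ((xf i : ℝ) : ℂ)))
    have e0 : (M.map (algebraMap ℝ ℂ)) *ᵥ ((WithLp.equiv 2 _).symm (fun i => ((xf i : ℝ) : ℂ)) : EuclideanSpace ℂ (Fin n)) = fun i => (((M *ᵥ xf) i : ℝ) : ℂ) := mapC_mulVec M xf
    rw [e0] at h2
    have eL : ‖(EuclideanSpace.equiv (Fin n) ℂ).symm (fun i => (((M *ᵥ xf) i : ℝ) : ℂ))‖
        = ‖((WithLp.equiv 2 _).symm (M *ᵥ xf) : EuclideanSpace ℝ (Fin n))‖ := by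
      simp [EuclideanSpace.norm_eq]
    have eR : ‖((WithLp.equiv 2 _).symm (fun i => ((xf i : ℝ) : ℂ)) : EuclideanSpace ℂ (Fin n))‖ = ‖x‖ := by
      rw [show x = (WithLp.equiv 2 _).symm xf from (Equiv.symm_apply_apply _ _).symm]
      simp [EuclideanSpace.norm_eq]
    rw [eL, eR] at h2
    rw [h1]
    exact h2

lemma mapC_pow (A : Matrix (Fin n) (Fin n) ℝ) (s : ℕ) :
    (A.map (algebraMap ℝ ℂ)) ^ s = (A ^ s).map (algebraMap ℝ ℂ) := by
  simpa [RingHom.mapMatrix_apply] using (map_pow ((algebraMap ℝ ℂ).mapMatrix) A s).symm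

lemma norm_transpose (M : Matrix (Fin n) (Fin n) ℝ) : ‖Mᵀ‖ = ‖M‖ := by
  have h : Mᴴ = Mᵀ := rfl
  rw [← h, Matrix.l2_opNorm_conjTranspose]

lemma eventually_norm_pow_le'' (A : Matrix (Fin n) (Fin n) ℝ)
    (hA : spectralRadius ℂ (A.map (algebraMap ℝ ℂ)) < 1) :
    ∃ r : ℝ, 0 ≤ r ∧ r < 1 ∧ ∀ᶠ s : ℕ in atTop, ‖A ^ s‖ ≤ r ^ s := by
  set B := A.map (algebraMap ℝ ℂ) with hB
  obtain ⟨c, hc1, hc2⟩ := exists_between hA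
  have hgel := spectrum.pow_nnnorm_pow_one_div_tendsto_nhds_spectralRadius B
  have hev : ∀ᶠ s : ℕ in atTop, (‖B ^ s‖₊ : ENNReal) ^ (1 / (s:ℝ)) < c :=
    hgel.eventually_lt_const hc1
  have hct : c ≠ ⊤ := (hc2.trans_le le_top).ne
  refine ⟨c.toReal, ENNReal.toReal_nonneg, ?_, ?_⟩
  · have := ENNReal.toReal_lt_toReal hct (by norm_num : (1:ENNReal) ≠ ⊤) |>.mpr hc2
    simpa using this
  · filter_upwards [hev, eventually_ge_atTop 1] with s hs hs1
    have hsne : (s:ℝ) ≠ 0 := by positivity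
    have h1 : (‖B ^ s‖₊ : ENNReal) ≤ c ^ (s:ℝ) := by
      have h := ENNReal.rpow_le_rpow hs.le (le_of_lt (by positivity : (0:ℝ) < (s:ℝ)))
      rwa [← ENNReal.rpow_mul, one_div_mul_cancel hsne, ENNReal.rpow_one] at h
    have h2 : ‖B ^ s‖ ≤ c.toReal ^ s := by
      have h3 := ENNReal.toReal_mono (by rw [ENNReal.rpow_natCast]; exact ENNReal.pow_ne_top hct) h1
      rwa [ENNReal.coe_toReal, coe_nnnorm, ENNReal.rpow_natCast, ENNReal.toReal_pow] at h3
    calc ‖A ^ s‖ = ‖B ^ s‖ := by rw [hB, mapC_pow, norm_mapC]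
    _ ≤ c.toReal ^ s := h2

lemma summable_gram (A : Matrix (Fin n) (Fin n) ℝ)
    (hA : spectralRadius ℂ (A.map (algebraMap ℝ ℂ)) < 1) :
    Summable (fun s : ℕ => A ^ s * (A ^ s)ᵀ) := by
  obtain ⟨r, hr0, hr1, hev⟩ := eventually_norm_pow_le'' A hA
  apply Summable.of_norm_bounded_eventually_nat (g := fun s => (r^2)^s)
  · exact summable_geometric_of_lt_one (by positivity) (by nlinarith)
  · filter_upwards [hev] with s hs
    calc ‖A ^ s * (A ^ s)ᵀ‖ ≤ ‖A ^ s‖ * ‖(A ^ s)ᵀ‖ := Matrix.l2_opNorm_mul _ _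
    _ = ‖A ^ s‖ * ‖A ^ s‖ := by rw [norm_transpose]
    _ ≤ r ^ s * r ^ s := mul_le_mul hs hs (norm_nonneg _) (by positivity)
    _ = (r^2)^s := by ring

lemma spectrum_transpose_mem {K : Type*} [Field K] (B : Matrix (Fin n) (Fin n) K) {z : K}
    (hz : z ∈ spectrum K B) : z ∈ spectrum K Bᵀ := by
  rw [spectrum.mem_iff] at hz ⊢
  intro h
  apply hz
  rw [Matrix.isUnit_iff_isUnit_det] at h ⊢
  rwa [show algebraMap K (Matrix (Fin n) (Fin n) K) z - Bᵀ
      = (algebraMap K (Matrix (Fin n) (Fin n) K) z - B)ᵀ by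
    rw [Matrix.transpose_sub]
    congr 1
    rw [Algebra.algebraMap_eq_smul_one, Matrix.transpose_smul, Matrix.transpose_one],
    Matrix.det_transpose] at h

lemma exists_eigenvector {K : Type*} [Field K] (B : Matrix (Fin n) (Fin n) K) {z : K}
    (hz : z ∈ spectrum K B) : ∃ v : Fin n → K, v ≠ 0 ∧ B *ᵥ v = z • v := by
  rw [← AlgEquiv.spectrum_eq (Matrix.toLinAlgEquiv' (R := K) (n := Fin n)) B,
    ← Module.End.hasEigenvalue_iff_mem_spectrum] at hz
  obtain ⟨v, hv⟩ := hz.exists_hasEigenvector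
  refine ⟨v, hv.2, ?_⟩
  have := hv.apply_eq_smul
  simpa [Matrix.toLinAlgEquiv'_apply, Matrix.toLin'_apply] using this

lemma pow_mulVec_eig {K : Type*} [Field K] (M : Matrix (Fin n) (Fin n) K) {z : K}
    {v : Fin n → K} (h : M *ᵥ v = z • v) (s : ℕ) : (M ^ s) *ᵥ v = z ^ s • v := by
  induction s with
  | zero => simp
  | succ k ih =>
    rw [pow_succ, ← Matrix.mulVec_mulVec, h, Matrix.mulVec_smul, ih, smul_smul, pow_succ]
    try ring_nf

lemma star_eigen (A : Matrix (Fin n) (Fin n) ℝ) {z : ℂ} {v : Fin n → ℂ}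
    (h : (Aᵀ.map (algebraMap ℝ ℂ)) *ᵥ v = z • v) :
    (Aᵀ.map (algebraMap ℝ ℂ)) *ᵥ (star v) = star z • star v := by
  funext i
  have h' := congrArg (fun w => star (w i)) h
  simp only [Matrix.mulVec, dotProduct, Pi.smul_apply, smul_eq_mul, star_mul',
    star_sum, Pi.star_apply, Matrix.map_apply, Matrix.transpose_apply] at h' ⊢
  rw [← h']
  apply Finset.sum_congr rfl
  intro j _
  congr 1
  simp [Complex.conj_ofReal]

end SpecRadAux

open SpecRadAux in
/-- For stable `A`, `ρ(A) ≤ √(1 − ‖Γ_∞(A)‖⁻¹)`. -/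
theorem specRad_le_sqrt {n : ℕ} (A : Matrix (Fin n) (Fin n) ℝ)
    (hA : specRad A < 1) :
    specRad A ≤ ENNReal.ofReal (Real.sqrt (1 - ‖gramInf A‖⁻¹)) := by
  classical
  set B := A.map (algebraMap ℝ ℂ) with hB
  have key : ∀ z ∈ spectrum ℂ B, ‖z‖ ≤ Real.sqrt (1 - ‖gramInf A‖⁻¹) := by
    intro z hz
    -- ‖z‖ < 1
    have hzlt : ‖z‖ < 1 := by
      have h1 : (‖z‖₊ : ENNReal) ≤ specRad A :=
        le_iSup₂ (f := fun k (_ : k ∈ spectrum ℂ B) => (‖k‖₊ : ENNReal)) z hz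
      have h2 : (‖z‖₊ : ENNReal) < 1 := lt_of_le_of_lt h1 hA
      rw [← ENNReal.coe_one, ENNReal.coe_lt_coe] at h2
      exact_mod_cast h2
    set r : ℝ := ‖z‖ ^ 2 with hr
    have hr0 : 0 ≤ r := sq_nonneg _
    have hr1 : r < 1 := by nlinarith [norm_nonneg z]
    have h1r : 0 < 1 - r := by linarith
    -- eigenvector of Bᵀ
    obtain ⟨v, hv0, hv⟩ := exists_eigenvector Bᵀ (spectrum_transpose_mem B hz)
    have hvT : (Aᵀ.map (algebraMap ℝ ℂ)) *ᵥ v = z • v := by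
      rwa [show Aᵀ.map (algebraMap ℝ ℂ) = Bᵀ from Matrix.transpose_map]
    -- the quadratic form functional
    set Φ : Matrix (Fin n) (Fin n) ℝ →ₐ[ℝ] Matrix (Fin n) (Fin n) ℂ :=
      (Algebra.ofId ℝ ℂ).mapMatrix with hΦdef
    have hΦ : ∀ M : Matrix (Fin n) (Fin n) ℝ, Φ M = M.map (algebraMap ℝ ℂ) := fun M => rfl
    set φ₀ : Matrix (Fin n) (Fin n) ℝ →ₗ[ℝ] ℂ :=
      { toFun := fun M => star v ⬝ᵥ ((Φ M) *ᵥ v)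
        map_add' := fun M N => by
          show star v ⬝ᵥ ((Φ (M + N)) *ᵥ v) = star v ⬝ᵥ ((Φ M) *ᵥ v) + star v ⬝ᵥ ((Φ N) *ᵥ v)
          rw [map_add, Matrix.add_mulVec, dotProduct_add]
        map_smul' := fun c M => by
          show star v ⬝ᵥ ((Φ (c • M)) *ᵥ v) = (RingHom.id ℝ) c • (star v ⬝ᵥ ((Φ M) *ᵥ v))
          rw [_root_.map_smul, Matrix.smul_mulVec, dotProduct_smul]
          rfl } with hφ₀
    set φ : Matrix (Fin n) (Fin n) ℝ →L[ℝ] ℂ := LinearMap.toContinuousLinearMap φ₀ with hφ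
    have hsum := summable_gram A hA
    have hφΓ : φ (gramInf A) = ∑' s : ℕ, φ (A ^ s * (A ^ s)ᵀ) := by
      rw [show gramInf A = ∑' s : ℕ, A ^ s * (A ^ s)ᵀ from rfl]
      exact φ.map_tsum hsum
    -- value of each term
    have hterm : ∀ s : ℕ, φ (A ^ s * (A ^ s)ᵀ) = ((r : ℂ)) ^ s * (star v ⬝ᵥ v) := by
      intro s
      have hφap : φ (A ^ s * (A ^ s)ᵀ) = star v ⬝ᵥ (((A ^ s * (A ^ s)ᵀ).map (algebraMap ℝ ℂ)) *ᵥ v) := rfl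
      have hmap : (A ^ s * (A ^ s)ᵀ).map (algebraMap ℝ ℂ) = B ^ s * (Bᵀ) ^ s := by
        rw [Matrix.map_mul, Matrix.transpose_map, ← mapC_pow, Matrix.transpose_pow]
      have heig := pow_mulVec_eig Bᵀ hv s
      have heigstar := pow_mulVec_eig Bᵀ (by
        have := star_eigen A hvT
        rwa [show Aᵀ.map (algebraMap ℝ ℂ) = Bᵀ from Matrix.transpose_map] at this) s
      have hzz : z * star z = (r : ℂ) := by
        rw [hr, Complex.star_def, Complex.mul_conj, ← Complex.sq_norm]
      calc φ (A ^ s * (A ^ s)ᵀ)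
          = star v ⬝ᵥ ((B ^ s * (Bᵀ) ^ s) *ᵥ v) := by rw [hφap, hmap]
        _ = star v ⬝ᵥ (B ^ s *ᵥ ((Bᵀ) ^ s *ᵥ v)) := by rw [Matrix.mulVec_mulVec]
        _ = star v ⬝ᵥ (B ^ s *ᵥ (z ^ s • v)) := by rw [heig]
        _ = z ^ s * (star v ⬝ᵥ (B ^ s *ᵥ v)) := by
            rw [Matrix.mulVec_smul, dotProduct_smul, smul_eq_mul]
        _ = z ^ s * ((star v ᵥ* B ^ s) ⬝ᵥ v) := by rw [dotProduct_mulVec]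
        _ = z ^ s * (((Bᵀ) ^ s *ᵥ star v) ⬝ᵥ v) := by
            rw [← Matrix.transpose_pow, Matrix.mulVec_transpose]
        _ = z ^ s * ((star z ^ s • star v) ⬝ᵥ v) := by rw [heigstar]
        _ = z ^ s * (star z ^ s * (star v ⬝ᵥ v)) := by rw [smul_dotProduct, smul_eq_mul]
        _ = ((r : ℂ)) ^ s * (star v ⬝ᵥ v) := by rw [← mul_assoc, ← mul_pow, hzz]
  -- sum the geometric series
    have hgeo : φ (gramInf A) = (1 - (r : ℂ))⁻¹ * (star v ⬝ᵥ v) := by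
      rw [hφΓ]
      simp_rw [hterm]
      rw [tsum_mul_right, tsum_geometric_of_norm_lt_one (by
        rw [Complex.norm_real, Real.norm_eq_abs, abs_of_nonneg hr0]; exact hr1)]
    -- identify star v ⬝ᵥ v with the norm
    set ve : EuclideanSpace ℂ (Fin n) := (WithLp.equiv 2 _).symm v with hve
    have hc : star v ⬝ᵥ v = ((‖ve‖ ^ 2 : ℝ) : ℂ) := by
      have h : @inner ℂ _ _ ((WithLp.equiv 2 _).symm v : EuclideanSpace ℂ (Fin n)) ((WithLp.equiv 2 _).symm v) = star v ⬝ᵥ v := by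
          rw [dotProduct_comm]; rfl
      rw [hve, ← h, inner_self_eq_norm_sq_to_K]
      norm_cast
    have hvpos : 0 < ‖ve‖ := by
      rw [norm_pos_iff]
      intro h0
      apply hv0
      have : v = (WithLp.equiv 2 _) ve := rfl
      rw [this, h0]
      rfl
    -- bound |φ Γ|
    have hΓap : φ (gramInf A) = star v ⬝ᵥ (((gramInf A).map (algebraMap ℝ ℂ)) *ᵥ v) := rfl
    have hbound : ‖φ (gramInf A)‖ ≤ ‖gramInf A‖ * ‖ve‖ ^ 2 := by
      set G := (gramInf A).map (algebraMap ℝ ℂ) with hG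
      have hin : φ (gramInf A) = @inner ℂ _ _ ve ((WithLp.equiv 2 _).symm (G *ᵥ v)) := by
        rw [hΓap]
        rw [dotProduct_comm]; rfl
      rw [hin]
      calc ‖@inner ℂ _ _ ve ((WithLp.equiv 2 _).symm (G *ᵥ v))‖
          ≤ ‖ve‖ * ‖((WithLp.equiv 2 _).symm (G *ᵥ v) : EuclideanSpace ℂ (Fin n))‖ :=
            norm_inner_le_norm _ _
        _ ≤ ‖ve‖ * (‖G‖ * ‖ve‖) := by
            apply mul_le_mul_of_nonneg_left _ (norm_nonneg _)
            exact G.l2_opNorm_mulVec ve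
        _ = ‖G‖ * ‖ve‖ ^ 2 := by ring
        _ = ‖gramInf A‖ * ‖ve‖ ^ 2 := by rw [hG, norm_mapC]
    -- compute ‖φ Γ‖ explicitly
    have hval : ‖φ (gramInf A)‖ = (1 - r)⁻¹ * ‖ve‖ ^ 2 := by
      rw [hgeo, hc, norm_mul]
      congr 1
      · rw [show (1 : ℂ) - (r : ℂ) = ((1 - r : ℝ) : ℂ) by push_cast; ring]
        rw [← Complex.ofReal_inv, Complex.norm_real, Real.norm_eq_abs,
          abs_of_pos (inv_pos.mpr h1r)]
      · rw [Complex.norm_real, Real.norm_eq_abs, abs_of_nonneg (by positivity)]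
    have hle : (1 - r)⁻¹ ≤ ‖gramInf A‖ := by
      have h := hval ▸ hbound
      have hv2 : 0 < ‖ve‖ ^ 2 := by positivity
      exact le_of_mul_le_mul_right h hv2
    have hΓpos : 0 < ‖gramInf A‖ := lt_of_lt_of_le (inv_pos.mpr h1r) hle
    have hinv : ‖gramInf A‖⁻¹ ≤ 1 - r := by
      rw [← inv_inv (1 - r)]
      exact inv_anti₀ (inv_pos.mpr h1r) hle
    have hrle : r ≤ 1 - ‖gramInf A‖⁻¹ := by linarith
    calc ‖z‖ = Real.sqrt r := by rw [hr, Real.sqrt_sq (norm_nonneg _)]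
    _ ≤ Real.sqrt (1 - ‖gramInf A‖⁻¹) := Real.sqrt_le_sqrt hrle
  -- conclude for the supremum
  show (⨆ k ∈ spectrum ℂ B, (‖k‖₊ : ENNReal)) ≤ _
  apply iSup₂_le
  intro z hz
  rw [← enorm_eq_nnnorm, ← ofReal_norm]
  exact ENNReal.ofReal_le_ofReal (key z hz)
end
end

section
/- Weighted Gramian series bound: for a stable matrix A with γ := 1 − ‖Γ_∞(A)‖^{-1} and any PSD U with tr(U) ≤ ū, ‖Σ_{s=0}^{t−2} s (A^s (A^s)^⊤ + A^s B U B^⊤ (A^s)^⊤)‖ ≤ (1 + ‖B‖² ū) γ / (1−γ)³ = (1 + ‖B‖² ū) ‖Γ_∞(A)‖³ (1 − ‖Γ_∞(A)‖^{-1}). -/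
open scoped Matrix.Norms.L2Operator
open Matrix MeasureTheory

noncomputable section

section PSDSqrt
open scoped MatrixOrder

def Matrix.PosSemidef.sqrt {k : ℕ} {M : Matrix (Fin k) (Fin k) ℝ} (_hM : M.PosSemidef) :
    Matrix (Fin k) (Fin k) ℝ :=
  CFC.sqrt M

lemma Matrix.PosSemidef.posSemidef_sqrt {k : ℕ} {M : Matrix (Fin k) (Fin k) ℝ}
    (hM : M.PosSemidef) : hM.sqrt.PosSemidef :=
  (CFC.sqrt_nonneg M).posSemidef

lemma Matrix.PosSemidef.sqrt_mul_self {k : ℕ} {M : Matrix (Fin k) (Fin k) ℝ}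
    (hM : M.PosSemidef) : hM.sqrt * hM.sqrt = M :=
  CFC.sqrt_mul_sqrt_self M hM.nonneg

end PSDSqrt

namespace WGB
variable {j k : ℕ}

lemma opNorm_le_mulVec_bound (M : Matrix (Fin j) (Fin k) ℝ) {c : ℝ} (hc : 0 ≤ c)
    (h : ∀ x : EuclideanSpace ℝ (Fin k),
      ‖(EuclideanSpace.equiv (Fin j) ℝ).symm (M *ᵥ (WithLp.equiv _ _ x))‖ ≤ c * ‖x‖) :
    ‖M‖ ≤ c := by
  rw [Matrix.l2_opNorm_def]
  exact ContinuousLinearMap.opNorm_le_bound _ hc h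

lemma dot_self_eq (x : Fin k → ℝ) :
    x ⬝ᵥ x = ‖(EuclideanSpace.equiv (Fin k) ℝ).symm x‖ ^ 2 := by
  rw [← real_inner_self_eq_norm_sq]
  rfl

lemma dot_self_nonneg (x : Fin k → ℝ) : 0 ≤ x ⬝ᵥ x := by
  rw [dot_self_eq]; positivity

lemma norm_mulVec_le (M : Matrix (Fin j) (Fin k) ℝ) (v : Fin k → ℝ) :
    ‖(EuclideanSpace.equiv (Fin j) ℝ).symm (M *ᵥ v)‖ ≤
      ‖M‖ * ‖(EuclideanSpace.equiv (Fin k) ℝ).symm v‖ :=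
  M.l2_opNorm_mulVec ((EuclideanSpace.equiv (Fin k) ℝ).symm v)

lemma dot_mulVec_le (M : Matrix (Fin k) (Fin k) ℝ) (x : Fin k → ℝ) :
    x ⬝ᵥ (M *ᵥ x) ≤ ‖M‖ * (x ⬝ᵥ x) := by
  have h1 : x ⬝ᵥ (M *ᵥ x) = inner ℝ ((EuclideanSpace.equiv (Fin k) ℝ).symm x)
      ((EuclideanSpace.equiv (Fin k) ℝ).symm (M *ᵥ x)) := by rw [real_inner_comm]; rfl
  rw [h1, dot_self_eq]
  calc inner ℝ _ _ ≤ ‖(EuclideanSpace.equiv (Fin k) ℝ).symm x‖ *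
        ‖(EuclideanSpace.equiv (Fin k) ℝ).symm (M *ᵥ x)‖ := real_inner_le_norm _ _
    _ ≤ ‖(EuclideanSpace.equiv (Fin k) ℝ).symm x‖ *
        (‖M‖ * ‖(EuclideanSpace.equiv (Fin k) ℝ).symm x‖) := by
        refine mul_le_mul_of_nonneg_left ?_ (norm_nonneg _)
        exact norm_mulVec_le M x
    _ = ‖M‖ * ‖(EuclideanSpace.equiv (Fin k) ℝ).symm x‖ ^ 2 := by ring

end WGB

namespace WGB

lemma sqrt_transpose {k : ℕ} {M : Matrix (Fin k) (Fin k) ℝ} (hM : M.PosSemidef) :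
    hM.sqrtᵀ = hM.sqrt := by
  have := hM.posSemidef_sqrt.isHermitian
  rwa [Matrix.IsHermitian, Matrix.conjTranspose_eq_transpose_of_trivial] at this

lemma dot_sqrt (M : Matrix (Fin k) (Fin k) ℝ) (hM : M.PosSemidef) (v : Fin k → ℝ) :
    (hM.sqrt *ᵥ v) ⬝ᵥ (hM.sqrt *ᵥ v) = v ⬝ᵥ (M *ᵥ v) := by
  rw [Matrix.dotProduct_mulVec, ← Matrix.mulVec_transpose, sqrt_transpose hM,
    Matrix.mulVec_mulVec, hM.sqrt_mul_self, dotProduct_comm,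
    Matrix.dotProduct_mulVec, ← Matrix.mulVec_transpose]

lemma opNorm_le_of_qf {M : Matrix (Fin k) (Fin k) ℝ} (hM : M.PosSemidef) {c : ℝ}
    (hc : 0 ≤ c) (h : ∀ x : Fin k → ℝ, x ⬝ᵥ (M *ᵥ x) ≤ c * (x ⬝ᵥ x)) : ‖M‖ ≤ c := by
  set S := hM.sqrt with hS
  have hSnorm : ‖S‖ ≤ Real.sqrt c := by
    apply opNorm_le_mulVec_bound _ (Real.sqrt_nonneg c)
    intro x
    have h2 : ‖(EuclideanSpace.equiv (Fin k) ℝ).symm (S *ᵥ (WithLp.equiv _ _ x))‖ ^ 2 ≤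
        (Real.sqrt c * ‖x‖) ^ 2 := by
      rw [← dot_self_eq, dot_sqrt M hM]
      have := h (WithLp.equiv _ _ x)
      calc _ ≤ c * ((WithLp.equiv _ _ x) ⬝ᵥ (WithLp.equiv _ _ x)) := this
        _ = (Real.sqrt c * ‖x‖) ^ 2 := by
          rw [mul_pow, Real.sq_sqrt hc, dot_self_eq]
          rfl
    have h3 := Real.sqrt_le_sqrt h2
    rwa [Real.sqrt_sq (norm_nonneg _), Real.sqrt_sq (by positivity)] at h3
  apply opNorm_le_mulVec_bound _ hc
  intro x
  have hMx : M *ᵥ (WithLp.equiv _ _ x) = S *ᵥ (S *ᵥ (WithLp.equiv _ _ x)) := by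
    rw [Matrix.mulVec_mulVec, hM.sqrt_mul_self]
  rw [hMx]
  calc ‖(EuclideanSpace.equiv (Fin k) ℝ).symm (S *ᵥ (S *ᵥ (WithLp.equiv _ _ x)))‖
      ≤ ‖S‖ * ‖(EuclideanSpace.equiv (Fin k) ℝ).symm (S *ᵥ (WithLp.equiv _ _ x))‖ :=
        norm_mulVec_le S _
    _ ≤ Real.sqrt c * (Real.sqrt c * ‖x‖) := by
        apply mul_le_mul hSnorm ?_ (norm_nonneg _) (Real.sqrt_nonneg c)
        calc _ ≤ ‖S‖ * ‖x‖ := norm_mulVec_le S _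
          _ ≤ Real.sqrt c * ‖x‖ := mul_le_mul_of_nonneg_right hSnorm (norm_nonneg _)
    _ = c * ‖x‖ := by rw [← mul_assoc, Real.mul_self_sqrt hc]

end WGB

namespace WGB

lemma qf_le_trace {k : ℕ} {U : Matrix (Fin k) (Fin k) ℝ} (hU : U.PosSemidef)
    (y : Fin k → ℝ) : y ⬝ᵥ (U *ᵥ y) ≤ U.trace * (y ⬝ᵥ y) := by
  rw [← dot_sqrt U hU]
  have hsymm : ∀ i jj, hU.sqrt jj i = hU.sqrt i jj := fun i jj =>
    (congrFun (congrFun (sqrt_transpose hU) jj) i).symm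
  have htr : U.trace = ∑ i, ∑ jj, hU.sqrt i jj ^ 2 := by
    conv_lhs => rw [← hU.sqrt_mul_self]
    rw [Matrix.trace]
    refine Finset.sum_congr rfl fun i _ => ?_
    rw [Matrix.diag_apply, Matrix.mul_apply]
    exact Finset.sum_congr rfl fun jj _ => by rw [hsymm i jj]; ring
  have hCS : ∀ i, (hU.sqrt *ᵥ y) i * (hU.sqrt *ᵥ y) i ≤
      (∑ jj, hU.sqrt i jj ^ 2) * (y ⬝ᵥ y) := by
    intro i
    have h1 : (hU.sqrt *ᵥ y) i * (hU.sqrt *ᵥ y) i = (∑ jj, hU.sqrt i jj * y jj) ^ 2 := by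
      rw [Matrix.mulVec, dotProduct]; ring
    have h2 : y ⬝ᵥ y = ∑ jj, y jj ^ 2 := Finset.sum_congr rfl fun jj _ => by ring
    rw [h1, h2]
    exact Finset.sum_mul_sq_le_sq_mul_sq Finset.univ _ _
  calc (hU.sqrt *ᵥ y) ⬝ᵥ (hU.sqrt *ᵥ y) = ∑ i, (hU.sqrt *ᵥ y) i * (hU.sqrt *ᵥ y) i := rfl
    _ ≤ ∑ i, (∑ jj, hU.sqrt i jj ^ 2) * (y ⬝ᵥ y) := Finset.sum_le_sum fun i _ => hCS i
    _ = U.trace * (y ⬝ᵥ y) := by rw [htr, Finset.sum_mul]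

end WGB

namespace WGB

lemma norm_le_map_complex {k : ℕ} (M : Matrix (Fin k) (Fin k) ℝ) :
    ‖M‖ ≤ ‖M.map (algebraMap ℝ ℂ)‖ := by
  apply opNorm_le_mulVec_bound _ (norm_nonneg _)
  intro x
  set v : Fin k → ℝ := WithLp.equiv _ _ x with hv
  set xc : EuclideanSpace ℂ (Fin k) :=
    (EuclideanSpace.equiv (Fin k) ℂ).symm (fun i => (v i : ℂ)) with hxc
  have hnx : ‖xc‖ = ‖x‖ := by
    rw [EuclideanSpace.norm_eq, EuclideanSpace.norm_eq]
    congr 1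
    refine Finset.sum_congr rfl fun i _ => ?_
    show ‖(v i : ℂ)‖ ^ 2 = ‖x i‖ ^ 2
    rw [Complex.norm_real]
    rfl
  have hmv : ∀ i, (M.map (algebraMap ℝ ℂ) *ᵥ (fun i => (v i : ℂ))) i = ((M *ᵥ v) i : ℂ) := by
    intro i
    exact (RingHom.map_mulVec (algebraMap ℝ ℂ) M v i).symm
  have hn2 : ‖(EuclideanSpace.equiv (Fin k) ℝ).symm (M *ᵥ v)‖ =
      ‖(EuclideanSpace.equiv (Fin k) ℂ).symm (M.map (algebraMap ℝ ℂ) *ᵥ (fun i => (v i : ℂ)))‖ := by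
    rw [EuclideanSpace.norm_eq, EuclideanSpace.norm_eq]
    congr 1
    refine Finset.sum_congr rfl fun i _ => ?_
    rw [show ((EuclideanSpace.equiv (Fin k) ℂ).symm
      (M.map (algebraMap ℝ ℂ) *ᵥ (fun i => (v i : ℂ)))) i =
      (M.map (algebraMap ℝ ℂ) *ᵥ (fun i => (v i : ℂ))) i from rfl, hmv i]
    simp
  rw [hn2, ← hnx]
  exact Matrix.l2_opNorm_mulVec _ xc

lemma exists_geom_decay {k : ℕ} (A : Matrix (Fin k) (Fin k) ℝ)
    (hA : spectralRadius ℂ (A.map (algebraMap ℝ ℂ)) < 1) :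
    ∃ C r : ℝ, 0 ≤ C ∧ 0 ≤ r ∧ r < 1 ∧ ∀ s : ℕ, ‖A ^ s‖ ≤ C * r ^ s := by
  obtain ⟨c, hc1, hc2⟩ := exists_between hA
  set r : ℝ := max c.toReal (1/2) with hr
  have hc_ne : c ≠ ⊤ := (hc2.trans (by norm_num)).ne
  have hr0 : (0:ℝ) ≤ r := le_trans (by norm_num) (le_max_right _ _)
  have hr1 : r < 1 := by
    apply max_lt ?_ (by norm_num)
    have := ENNReal.toReal_strict_mono (by norm_num) hc2
    simpa using this
  have hcr : spectralRadius ℂ (A.map (algebraMap ℝ ℂ)) < ENNReal.ofReal r := by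
    refine hc1.trans_le ?_
    rw [← ENNReal.ofReal_toReal hc_ne]
    exact ENNReal.ofReal_le_ofReal (le_max_left _ _)
  have T := spectrum.pow_nnnorm_pow_one_div_tendsto_nhds_spectralRadius
    (A.map (algebraMap ℝ ℂ))
  have hev := T.eventually_lt_const hcr
  rw [Filter.eventually_atTop] at hev
  obtain ⟨N, hN⟩ := hev
  set N₀ : ℕ := max N 1 with hN₀
  have hbig : ∀ s : ℕ, N₀ ≤ s → ‖A ^ s‖ ≤ r ^ s := by
    intro s hs
    have hs1 : 1 ≤ s := le_trans (le_max_right _ _) hs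
    have h1 := hN s (le_trans (le_max_left _ _) hs)
    have hss : (0:ℝ) < 1 / s := by positivity
    have h2 := ENNReal.rpow_lt_rpow h1 (show (0:ℝ) < s by exact_mod_cast hs1)
    have hsne : (s:ℝ) ≠ 0 := by
      have h0 : (0:ℕ) < s := hs1
      exact_mod_cast h0.ne'
    rw [← ENNReal.rpow_mul, one_div, inv_mul_cancel₀ hsne, ENNReal.rpow_one] at h2
    have h2' : (‖(A.map (algebraMap ℝ ℂ)) ^ s‖₊ : ENNReal) < (ENNReal.ofReal r) ^ s := by
      rwa [← ENNReal.rpow_natCast (ENNReal.ofReal r) s]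
    have h3 : (‖(A.map (algebraMap ℝ ℂ)) ^ s‖₊ : ENNReal) < ENNReal.ofReal (r ^ s) := by
      rw [ENNReal.ofReal_pow hr0]; exact h2'
    have h4 := ENNReal.toReal_lt_of_lt_ofReal h3
    rw [ENNReal.coe_toReal, coe_nnnorm] at h4
    calc ‖A ^ s‖ ≤ ‖(A ^ s).map (algebraMap ℝ ℂ)‖ := norm_le_map_complex _
      _ = ‖(A.map (algebraMap ℝ ℂ)) ^ s‖ := by
          rw [show (A.map (algebraMap ℝ ℂ)) = (algebraMap ℝ ℂ).mapMatrix A from rfl,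
            ← map_pow]
          rfl
      _ ≤ r ^ s := h4.le
  set C : ℝ := max 1 ((Finset.range (N₀ + 1)).sup' (by simp) (fun s => ‖A ^ s‖ / r ^ s)) with hC
  refine ⟨C, r, le_trans zero_le_one (le_max_left _ _), hr0, hr1, fun s => ?_⟩
  have hrpos : (0:ℝ) < r := lt_of_lt_of_le (by norm_num) (le_max_right _ _)
  by_cases hcase : s ≤ N₀
  · have hmem : s ∈ Finset.range (N₀ + 1) := Finset.mem_range.mpr (by omega)
    have := Finset.le_sup' (fun s => ‖A ^ s‖ / r ^ s) hmem
    have h5 : ‖A ^ s‖ / r ^ s ≤ C := le_trans this (le_max_right _ _)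
    rw [div_le_iff₀ (by positivity)] at h5
    exact h5
  · have h6 := hbig s (by omega)
    calc ‖A ^ s‖ ≤ r ^ s := h6
      _ = 1 * r ^ s := (one_mul _).symm
      _ ≤ C * r ^ s := by
          apply mul_le_mul_of_nonneg_right (le_max_left _ _) (by positivity)

end WGB

namespace WGB

def qfLin {k : ℕ} (x : Fin k → ℝ) : Matrix (Fin k) (Fin k) ℝ →ₗ[ℝ] ℝ where
  toFun M := x ⬝ᵥ (M *ᵥ x)
  map_add' M N := by simp only [Matrix.add_mulVec, dotProduct_add]
  map_smul' c M := by
    simp only [Matrix.smul_mulVec, dotProduct_smul, RingHom.id_apply, smul_eq_mul]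

lemma hasSum_qf {k : ℕ} {f : ℕ → Matrix (Fin k) (Fin k) ℝ} {M : Matrix (Fin k) (Fin k) ℝ}
    (h : HasSum f M) (x : Fin k → ℝ) :
    HasSum (fun s => x ⬝ᵥ (f s *ᵥ x)) (x ⬝ᵥ (M *ᵥ x)) :=
  h.map (qfLin x).toAddMonoidHom (qfLin x).continuous_of_finiteDimensional

lemma qf_congr {a b : ℕ} (C : Matrix (Fin a) (Fin b) ℝ) (U : Matrix (Fin b) (Fin b) ℝ)
    (x : Fin a → ℝ) :
    x ⬝ᵥ ((C * U * Cᵀ) *ᵥ x) = (Cᵀ *ᵥ x) ⬝ᵥ (U *ᵥ (Cᵀ *ᵥ x)) := by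
  rw [← Matrix.mulVec_mulVec, ← Matrix.mulVec_mulVec, Matrix.dotProduct_mulVec,
    ← Matrix.mulVec_transpose]

lemma psd_smul {k : ℕ} {c : ℝ} (hc : 0 ≤ c) {M : Matrix (Fin k) (Fin k) ℝ}
    (hM : M.PosSemidef) : (c • M).PosSemidef := by
  refine ⟨?_, fun x => ?_⟩
  · show (c • M)ᴴ = c • M
    rw [Matrix.conjTranspose_smul, hM.1.eq]
    congr 1
  · exact (hM.smul hc).2 x

end WGB

set_option maxHeartbeats 1000000 in
/-- **Weighted Gramian series bound.** For stable `A` (with `n ≥ 1`),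
`γ := 1 − ‖Γ_∞(A)‖⁻¹` and PSD `U` with `tr(U) ≤ ū`:
`‖Σ_{s=0}^{t−2} s (A^s(A^s)ᵀ + A^s B U Bᵀ (A^s)ᵀ)‖ ≤ (1+‖B‖²ū) γ/(1−γ)³`, and this
constant equals `(1+‖B‖²ū) ‖Γ_∞(A)‖³ (1 − ‖Γ_∞(A)‖⁻¹)`. -/
theorem weighted_gramian_bound {n m : ℕ} (hn : 0 < n) (A : Matrix (Fin n) (Fin n) ℝ)
    (B : Matrix (Fin n) (Fin m) ℝ) (ubar : ℝ) (hubar : 0 ≤ ubar)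
    (hA : specRad A < 1)
    (U : Matrix (Fin m) (Fin m) ℝ) (hU : U.PosSemidef) (hUtr : U.trace ≤ ubar)
    (t : ℕ) :
    ‖∑ s ∈ Finset.range (t - 1),
        (s : ℝ) • (A ^ s * (A ^ s)ᵀ + A ^ s * B * U * Bᵀ * (A ^ s)ᵀ)‖ ≤
      (1 + ‖B‖ ^ 2 * ubar) * (1 - ‖gramInf A‖⁻¹) /
        (1 - (1 - ‖gramInf A‖⁻¹)) ^ 3 ∧
    (1 + ‖B‖ ^ 2 * ubar) * (1 - ‖gramInf A‖⁻¹) / (1 - (1 - ‖gramInf A‖⁻¹)) ^ 3 =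
      (1 + ‖B‖ ^ 2 * ubar) * ‖gramInf A‖ ^ 3 * (1 - ‖gramInf A‖⁻¹) := by
  classical
  obtain ⟨C, r, hC0, hr0, hr1, hpow⟩ := WGB.exists_geom_decay A hA
  have htnorm : ∀ s : ℕ, ‖(A ^ s)ᵀ‖ = ‖A ^ s‖ := fun s => by
    rw [← Matrix.conjTranspose_eq_transpose_of_trivial, Matrix.l2_opNorm_conjTranspose]
  have hsummable : Summable (fun s : ℕ => A ^ s * (A ^ s)ᵀ) := by
    refine Summable.of_norm_bounded (g := fun s => (C * C) * ((r * r) ^ s))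
      ((summable_geometric_of_lt_one (by positivity) (by nlinarith)).mul_left _) ?_
    intro s
    calc ‖A ^ s * (A ^ s)ᵀ‖ ≤ ‖A ^ s‖ * ‖(A ^ s)ᵀ‖ := Matrix.l2_opNorm_mul _ _
      _ = ‖A ^ s‖ * ‖A ^ s‖ := by rw [htnorm]
      _ ≤ (C * r ^ s) * (C * r ^ s) :=
          mul_le_mul (hpow s) (hpow s) (norm_nonneg _) (by positivity)
      _ = (C * C) * ((r * r) ^ s) := by rw [mul_pow]; ring
  have hG : HasSum (fun s : ℕ => A ^ s * (A ^ s)ᵀ) (gramInf A) := by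
    rw [gramInf]; exact hsummable.hasSum
  have hq : ∀ (s : ℕ) (x : Fin n → ℝ),
      x ⬝ᵥ ((A ^ s * (A ^ s)ᵀ) *ᵥ x) = ((A ^ s)ᵀ *ᵥ x) ⬝ᵥ ((A ^ s)ᵀ *ᵥ x) := by
    intro s x
    have h := WGB.qf_congr (A ^ s) (1 : Matrix (Fin n) (Fin n) ℝ) x
    simpa using h
  have hgsum : ∀ x : Fin n → ℝ,
      HasSum (fun s => x ⬝ᵥ ((A ^ s * (A ^ s)ᵀ) *ᵥ x)) (x ⬝ᵥ (gramInf A *ᵥ x)) :=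
    fun x => WGB.hasSum_qf hG x
  have hq0 : ∀ x : Fin n → ℝ, x ⬝ᵥ ((A ^ 0 * (A ^ 0)ᵀ) *ᵥ x) = x ⬝ᵥ x := by
    intro x; simp
  have hqnn : ∀ (s : ℕ) (x : Fin n → ℝ), (0:ℝ) ≤ x ⬝ᵥ ((A ^ s * (A ^ s)ᵀ) *ᵥ x) :=
    fun s x => by rw [hq]; exact WGB.dot_self_nonneg _
  have hgle : ∀ x : Fin n → ℝ, x ⬝ᵥ (gramInf A *ᵥ x) ≤ ‖gramInf A‖ * (x ⬝ᵥ x) :=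
    fun x => WGB.dot_mulVec_le _ x
  have hgge : ∀ x : Fin n → ℝ, x ⬝ᵥ x ≤ x ⬝ᵥ (gramInf A *ᵥ x) := by
    intro x
    have h := le_hasSum (hgsum x) 0 (fun s _ => hqnn s x)
    rwa [hq0 x] at h
  have h1G : 1 ≤ ‖gramInf A‖ := by
    set x : Fin n → ℝ := Pi.single ⟨0, hn⟩ 1 with hx
    have hxx : x ⬝ᵥ x = 1 := by simp [hx, dotProduct, Pi.single_apply]
    have h12 := (hgge x).trans (hgle x)
    rwa [hxx, mul_one] at h12
  have hGpos : (0:ℝ) < ‖gramInf A‖ := lt_of_lt_of_le one_pos h1G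
  set γ : ℝ := 1 - ‖gramInf A‖⁻¹ with hγ
  have h11 : (1:ℝ) - γ = ‖gramInf A‖⁻¹ := by rw [hγ]; ring
  have hγ0 : 0 ≤ γ := by
    have h13 : ‖gramInf A‖⁻¹ ≤ 1 := by
      rw [inv_le_one_iff₀]; right; exact h1G
    rw [hγ]; linarith
  have hγ1 : γ < 1 := by
    have h14 : 0 < ‖gramInf A‖⁻¹ := inv_pos.mpr hGpos
    rw [hγ]; linarith
  have hinv : ∀ x : Fin n → ℝ,
      ‖gramInf A‖⁻¹ * (x ⬝ᵥ (gramInf A *ᵥ x)) ≤ x ⬝ᵥ x := by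
    intro x
    have h2 := mul_le_mul_of_nonneg_left (hgle x) (inv_nonneg.mpr hGpos.le)
    rwa [← mul_assoc, inv_mul_cancel₀ hGpos.ne', one_mul] at h2
  have hstep : ∀ x : Fin n → ℝ,
      (Aᵀ *ᵥ x) ⬝ᵥ (gramInf A *ᵥ (Aᵀ *ᵥ x)) ≤ γ * (x ⬝ᵥ (gramInf A *ᵥ x)) := by
    intro x
    have hs1 : HasSum (fun s => x ⬝ᵥ ((A ^ (s+1) * (A ^ (s+1))ᵀ) *ᵥ x))
        ((x ⬝ᵥ (gramInf A *ᵥ x)) - x ⬝ᵥ x) := by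
      have h3 := (hasSum_nat_add_iff'
        (f := fun s => x ⬝ᵥ ((A ^ s * (A ^ s)ᵀ) *ᵥ x)) 1).mpr (hgsum x)
      simpa using h3
    have hterm : ∀ s : ℕ, x ⬝ᵥ ((A ^ (s+1) * (A ^ (s+1))ᵀ) *ᵥ x) =
        (Aᵀ *ᵥ x) ⬝ᵥ ((A ^ s * (A ^ s)ᵀ) *ᵥ (Aᵀ *ᵥ x)) := by
      intro s
      rw [hq, hq]
      have hw : (A ^ s)ᵀ *ᵥ (Aᵀ *ᵥ x) = (A ^ (s+1))ᵀ *ᵥ x := by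
        rw [Matrix.mulVec_mulVec, ← Matrix.transpose_mul, ← pow_succ']
      rw [hw]
    simp only [hterm] at hs1
    have h5 := (hgsum (Aᵀ *ᵥ x)).unique hs1
    rw [h5]
    have h15 : γ * (x ⬝ᵥ (gramInf A *ᵥ x)) =
        x ⬝ᵥ (gramInf A *ᵥ x) - ‖gramInf A‖⁻¹ * (x ⬝ᵥ (gramInf A *ᵥ x)) := by
      rw [hγ]; ring
    rw [h15]
    linarith [hinv x]
  have hiter : ∀ (s : ℕ) (x : Fin n → ℝ),
      ((A ^ s)ᵀ *ᵥ x) ⬝ᵥ (gramInf A *ᵥ ((A ^ s)ᵀ *ᵥ x)) ≤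
        γ ^ s * (x ⬝ᵥ (gramInf A *ᵥ x)) := by
    intro s
    induction s with
    | zero => intro x; simp
    | succ s ih =>
      intro x
      have hw : (A ^ (s+1))ᵀ *ᵥ x = (A ^ s)ᵀ *ᵥ (Aᵀ *ᵥ x) := by
        rw [Matrix.mulVec_mulVec, ← Matrix.transpose_mul, ← pow_succ']
      rw [hw]
      calc ((A ^ s)ᵀ *ᵥ (Aᵀ *ᵥ x)) ⬝ᵥ (gramInf A *ᵥ ((A ^ s)ᵀ *ᵥ (Aᵀ *ᵥ x)))
          ≤ γ ^ s * ((Aᵀ *ᵥ x) ⬝ᵥ (gramInf A *ᵥ (Aᵀ *ᵥ x))) := ih (Aᵀ *ᵥ x)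
        _ ≤ γ ^ s * (γ * (x ⬝ᵥ (gramInf A *ᵥ x))) :=
            mul_le_mul_of_nonneg_left (hstep x) (pow_nonneg hγ0 s)
        _ = γ ^ (s+1) * (x ⬝ᵥ (gramInf A *ᵥ x)) := by ring
  have hqbound : ∀ (s : ℕ) (x : Fin n → ℝ),
      x ⬝ᵥ ((A ^ s * (A ^ s)ᵀ) *ᵥ x) ≤ γ ^ s * ‖gramInf A‖ * (x ⬝ᵥ x) := by
    intro s x
    calc x ⬝ᵥ ((A ^ s * (A ^ s)ᵀ) *ᵥ x)
        = ((A ^ s)ᵀ *ᵥ x) ⬝ᵥ ((A ^ s)ᵀ *ᵥ x) := hq s x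
      _ ≤ ((A ^ s)ᵀ *ᵥ x) ⬝ᵥ (gramInf A *ᵥ ((A ^ s)ᵀ *ᵥ x)) := hgge _
      _ ≤ γ ^ s * (x ⬝ᵥ (gramInf A *ᵥ x)) := hiter s x
      _ ≤ γ ^ s * (‖gramInf A‖ * (x ⬝ᵥ x)) :=
          mul_le_mul_of_nonneg_left (hgle x) (pow_nonneg hγ0 s)
      _ = γ ^ s * ‖gramInf A‖ * (x ⬝ᵥ x) := by ring
  have hQrw : ∀ (s : ℕ) (x : Fin n → ℝ),
      x ⬝ᵥ ((A ^ s * B * U * Bᵀ * (A ^ s)ᵀ) *ᵥ x) =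
        (Bᵀ *ᵥ ((A ^ s)ᵀ *ᵥ x)) ⬝ᵥ (U *ᵥ (Bᵀ *ᵥ ((A ^ s)ᵀ *ᵥ x))) := by
    intro s x
    have h6 : A ^ s * B * U * Bᵀ * (A ^ s)ᵀ = (A ^ s * B) * U * (A ^ s * B)ᵀ := by
      rw [Matrix.transpose_mul, ← Matrix.mul_assoc]
    have hy : (A ^ s * B)ᵀ *ᵥ x = Bᵀ *ᵥ ((A ^ s)ᵀ *ᵥ x) := by
      rw [Matrix.transpose_mul, ← Matrix.mulVec_mulVec]
    rw [h6, WGB.qf_congr, hy]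
  have hBt : ∀ w : Fin n → ℝ, (Bᵀ *ᵥ w) ⬝ᵥ (Bᵀ *ᵥ w) ≤ ‖B‖ ^ 2 * (w ⬝ᵥ w) := by
    intro w
    rw [WGB.dot_self_eq (Bᵀ *ᵥ w), WGB.dot_self_eq w]
    have h7 := WGB.norm_mulVec_le Bᵀ w
    rw [← Matrix.conjTranspose_eq_transpose_of_trivial, Matrix.l2_opNorm_conjTranspose] at h7
    calc ‖(EuclideanSpace.equiv (Fin m) ℝ).symm (Bᵀ *ᵥ w)‖ ^ 2
        ≤ (‖B‖ * ‖(EuclideanSpace.equiv (Fin n) ℝ).symm w‖) ^ 2 := by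
          apply pow_le_pow_left₀ (norm_nonneg _) h7
      _ = ‖B‖ ^ 2 * ‖(EuclideanSpace.equiv (Fin n) ℝ).symm w‖ ^ 2 := by ring
  have hrbound : ∀ (s : ℕ) (x : Fin n → ℝ),
      x ⬝ᵥ ((A ^ s * B * U * Bᵀ * (A ^ s)ᵀ) *ᵥ x) ≤
        ‖B‖ ^ 2 * ubar * (γ ^ s * ‖gramInf A‖ * (x ⬝ᵥ x)) := by
    intro s x
    rw [hQrw s x]
    calc (Bᵀ *ᵥ ((A ^ s)ᵀ *ᵥ x)) ⬝ᵥ (U *ᵥ (Bᵀ *ᵥ ((A ^ s)ᵀ *ᵥ x)))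
        ≤ U.trace * ((Bᵀ *ᵥ ((A ^ s)ᵀ *ᵥ x)) ⬝ᵥ (Bᵀ *ᵥ ((A ^ s)ᵀ *ᵥ x))) :=
          WGB.qf_le_trace hU _
      _ ≤ ubar * ((Bᵀ *ᵥ ((A ^ s)ᵀ *ᵥ x)) ⬝ᵥ (Bᵀ *ᵥ ((A ^ s)ᵀ *ᵥ x))) :=
          mul_le_mul_of_nonneg_right hUtr (WGB.dot_self_nonneg _)
      _ ≤ ubar * (‖B‖ ^ 2 * (((A ^ s)ᵀ *ᵥ x) ⬝ᵥ ((A ^ s)ᵀ *ᵥ x))) :=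
          mul_le_mul_of_nonneg_left (hBt _) hubar
      _ = ‖B‖ ^ 2 * (x ⬝ᵥ ((A ^ s * (A ^ s)ᵀ) *ᵥ x)) * ubar := by rw [← hq s x]; ring
      _ ≤ ‖B‖ ^ 2 * (γ ^ s * ‖gramInf A‖ * (x ⬝ᵥ x)) * ubar :=
          mul_le_mul_of_nonneg_right
            (mul_le_mul_of_nonneg_left (hqbound s x) (by positivity)) hubar
      _ = ‖B‖ ^ 2 * ubar * (γ ^ s * ‖gramInf A‖ * (x ⬝ᵥ x)) := by ring
  have hPpsd : ∀ s : ℕ, (A ^ s * (A ^ s)ᵀ).PosSemidef := by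
    intro s
    have h8 := Matrix.posSemidef_self_mul_conjTranspose (A ^ s)
    rwa [Matrix.conjTranspose_eq_transpose_of_trivial] at h8
  have hQpsd : ∀ s : ℕ, (A ^ s * B * U * Bᵀ * (A ^ s)ᵀ).PosSemidef := by
    intro s
    have h8 := hU.mul_mul_conjTranspose_same (A ^ s * B)
    rwa [Matrix.conjTranspose_eq_transpose_of_trivial, Matrix.transpose_mul,
      ← Matrix.mul_assoc] at h8
  have hMpsd : (∑ s ∈ Finset.range (t - 1),
      (s : ℝ) • (A ^ s * (A ^ s)ᵀ + A ^ s * B * U * Bᵀ * (A ^ s)ᵀ)).PosSemidef := by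
    refine Finset.sum_induction _ (fun M : Matrix (Fin n) (Fin n) ℝ => M.PosSemidef)
      (fun a b ha hb => ha.add hb) Matrix.PosSemidef.zero fun s _ => ?_
    exact WGB.psd_smul (Nat.cast_nonneg s) ((hPpsd s).add (hQpsd s))
  have hGeom : HasSum (fun s : ℕ => (s:ℝ) * γ ^ s) (γ / (1 - γ) ^ 2) := by
    have hng : ‖γ‖ < 1 := by rw [Real.norm_eq_abs, abs_of_nonneg hγ0]; exact hγ1
    exact hasSum_coe_mul_geometric_of_norm_lt_one hng
  have hsum_le : ∑ s ∈ Finset.range (t-1), (s:ℝ) * γ ^ s ≤ γ / (1 - γ) ^ 2 :=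
    sum_le_hasSum _ (fun s _ => mul_nonneg (Nat.cast_nonneg s) (pow_nonneg hγ0 s)) hGeom
  have hden : (0:ℝ) < (1 - γ) ^ 3 := by rw [h11]; exact pow_pos (inv_pos.mpr hGpos) 3
  have hqftotal : ∀ x : Fin n → ℝ,
      x ⬝ᵥ ((∑ s ∈ Finset.range (t - 1),
        (s : ℝ) • (A ^ s * (A ^ s)ᵀ + A ^ s * B * U * Bᵀ * (A ^ s)ᵀ)) *ᵥ x) ≤
      ((1 + ‖B‖ ^ 2 * ubar) * γ / (1 - γ) ^ 3) * (x ⬝ᵥ x) := by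
    intro x
    have hexp : WGB.qfLin x (∑ s ∈ Finset.range (t - 1),
        (s : ℝ) • (A ^ s * (A ^ s)ᵀ + A ^ s * B * U * Bᵀ * (A ^ s)ᵀ)) =
        ∑ s ∈ Finset.range (t-1), (s:ℝ) * (x ⬝ᵥ ((A ^ s * (A ^ s)ᵀ) *ᵥ x) +
          x ⬝ᵥ ((A ^ s * B * U * Bᵀ * (A ^ s)ᵀ) *ᵥ x)) := by
      rw [map_sum]
      refine Finset.sum_congr rfl fun s _ => ?_
      rw [_root_.map_smul, map_add, smul_eq_mul]
      rfl
    calc x ⬝ᵥ ((∑ s ∈ Finset.range (t - 1),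
          (s : ℝ) • (A ^ s * (A ^ s)ᵀ + A ^ s * B * U * Bᵀ * (A ^ s)ᵀ)) *ᵥ x)
        = ∑ s ∈ Finset.range (t-1), (s:ℝ) * (x ⬝ᵥ ((A ^ s * (A ^ s)ᵀ) *ᵥ x) +
          x ⬝ᵥ ((A ^ s * B * U * Bᵀ * (A ^ s)ᵀ) *ᵥ x)) := hexp
      _ ≤ ∑ s ∈ Finset.range (t-1),
          ((1 + ‖B‖ ^ 2 * ubar) * ‖gramInf A‖ * (x ⬝ᵥ x)) * ((s:ℝ) * γ ^ s) := by
          refine Finset.sum_le_sum fun s _ => ?_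
          have h9 := hqbound s x
          have h10 := hrbound s x
          have hE : x ⬝ᵥ ((A ^ s * (A ^ s)ᵀ) *ᵥ x) +
              x ⬝ᵥ ((A ^ s * B * U * Bᵀ * (A ^ s)ᵀ) *ᵥ x) ≤
              (1 + ‖B‖ ^ 2 * ubar) * (γ ^ s * ‖gramInf A‖ * (x ⬝ᵥ x)) := by
            have hE2 : (1 + ‖B‖ ^ 2 * ubar) * (γ ^ s * ‖gramInf A‖ * (x ⬝ᵥ x)) =
                γ ^ s * ‖gramInf A‖ * (x ⬝ᵥ x) +
                ‖B‖ ^ 2 * ubar * (γ ^ s * ‖gramInf A‖ * (x ⬝ᵥ x)) := by ring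
            rw [hE2]
            exact add_le_add h9 h10
          calc (s:ℝ) * (x ⬝ᵥ ((A ^ s * (A ^ s)ᵀ) *ᵥ x) +
                x ⬝ᵥ ((A ^ s * B * U * Bᵀ * (A ^ s)ᵀ) *ᵥ x))
              ≤ (s:ℝ) * ((1 + ‖B‖ ^ 2 * ubar) * (γ ^ s * ‖gramInf A‖ * (x ⬝ᵥ x))) :=
                mul_le_mul_of_nonneg_left hE (Nat.cast_nonneg s)
            _ = ((1 + ‖B‖ ^ 2 * ubar) * ‖gramInf A‖ * (x ⬝ᵥ x)) * ((s:ℝ) * γ ^ s) := by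
                ring
      _ = ((1 + ‖B‖ ^ 2 * ubar) * ‖gramInf A‖ * (x ⬝ᵥ x)) *
          (∑ s ∈ Finset.range (t-1), (s:ℝ) * γ ^ s) := by rw [← Finset.mul_sum]
      _ ≤ ((1 + ‖B‖ ^ 2 * ubar) * ‖gramInf A‖ * (x ⬝ᵥ x)) * (γ / (1 - γ) ^ 2) := by
          refine mul_le_mul_of_nonneg_left hsum_le ?_
          have := WGB.dot_self_nonneg x
          positivity
      _ = ((1 + ‖B‖ ^ 2 * ubar) * γ / (1 - γ) ^ 3) * (x ⬝ᵥ x) := by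
          rw [h11]
          field_simp
  have hc : 0 ≤ (1 + ‖B‖ ^ 2 * ubar) * γ / (1 - γ) ^ 3 :=
    div_nonneg (mul_nonneg (by positivity) hγ0) hden.le
  constructor
  · exact WGB.opNorm_le_of_qf hMpsd hc hqftotal
  · rw [h11, div_eq_mul_inv, inv_pow, inv_inv]
    ring
end
end
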